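/- arXiv:2306.01608 — 4 statements merged into one kernel-verified Lean document; each statement's English description precedes it below -/
import Mathlib

section
/- Let G₁ and G₂ be connected graphs, each of order at least 3, with edges u₁v₁ ∈ E(G₁) and u₂v₂ ∈ E(G₂). If G is the edge gluing of G₁ and G₂ obtained by identifying u₁ with u₂ and v₁ with v₂ (identifying the two edges), then γ_st(G) ≤ γ_st(G₁) + γ_st(G₂) + 1. -/
open SimpleGraph

/-- The degree of a vertex `v` in the graph `G`. -/
noncomputable def deg {V : Type*} (G : SimpleGraph V) (v : V) : ℕ :=
  (G.neighborSet v).ncard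

/-- `D` is a strong dominating set of `G`: every vertex outside `D` has a neighbor in `D`
of at least its own degree. -/
def IsSDS {V : Type*} (G : SimpleGraph V) (D : Set V) : Prop :=
  ∀ x ∉ D, ∃ y ∈ D, G.Adj x y ∧ deg G x ≤ deg G y

/-- The strong domination number of `G`. -/
noncomputable def gammaSt {V : Type*} (G : SimpleGraph V) : ℕ :=
  sInf {n | ∃ D : Set V, IsSDS G D ∧ D.ncard = n}

/-- The edge gluing of `G₁` and `G₂` along the edges `u₁v₁` and `u₂v₂`: the vertices `u₁, u₂`
are identified into the vertex `Sum.inr false`, and `v₁, v₂` into `Sum.inr true`. -/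
def glueE {V₁ V₂ : Type*} (G₁ : SimpleGraph V₁) (G₂ : SimpleGraph V₂)
    (u₁ v₁ : V₁) (u₂ v₂ : V₂) :
    SimpleGraph (({x : V₁ // x ≠ u₁ ∧ x ≠ v₁} ⊕ {x : V₂ // x ≠ u₂ ∧ x ≠ v₂}) ⊕ Bool) :=
  SimpleGraph.fromRel (fun a b =>
    match a, b with
    | .inl (.inl a), .inl (.inl b) => G₁.Adj a.1 b.1
    | .inl (.inr a), .inl (.inr b) => G₂.Adj a.1 b.1
    | .inr false, .inl (.inl b) => G₁.Adj u₁ b.1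
    | .inr false, .inl (.inr b) => G₂.Adj u₂ b.1
    | .inr true, .inl (.inl b) => G₁.Adj v₁ b.1
    | .inr true, .inl (.inr b) => G₂.Adj v₂ b.1
    | .inr false, .inr true => True
    | _, _ => False)

section Aux

open scoped Classical

variable {V₁ V₂ : Type*} {u₁ v₁ : V₁} {u₂ v₂ : V₂}

/-- The canonical map from `V₁` into the glued vertex type. -/
noncomputable def map₁ (u₁ v₁ : V₁) (u₂ v₂ : V₂) (x : V₁) :
    ({x : V₁ // x ≠ u₁ ∧ x ≠ v₁} ⊕ {x : V₂ // x ≠ u₂ ∧ x ≠ v₂}) ⊕ Bool :=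
  if h1 : x = u₁ then .inr false else if h2 : x = v₁ then .inr true
  else .inl (.inl ⟨x, h1, h2⟩)

/-- The canonical map from `V₂` into the glued vertex type. -/
noncomputable def map₂ (u₁ v₁ : V₁) (u₂ v₂ : V₂) (x : V₂) :
    ({x : V₁ // x ≠ u₁ ∧ x ≠ v₁} ⊕ {x : V₂ // x ≠ u₂ ∧ x ≠ v₂}) ⊕ Bool :=
  if h1 : x = u₂ then .inr false else if h2 : x = v₂ then .inr true
  else .inl (.inr ⟨x, h1, h2⟩)

lemma map₁_eq_inl_inl {x : V₁} {b : {x : V₁ // x ≠ u₁ ∧ x ≠ v₁}} :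
    map₁ u₁ v₁ u₂ v₂ x = .inl (.inl b) ↔ x = b.1 := by
  constructor
  · intro h
    unfold map₁ at h
    split_ifs at h with h1 h2 <;> simp_all [Subtype.ext_iff]
  · intro h
    subst h
    unfold map₁
    rw [dif_neg b.2.1, dif_neg b.2.2]

lemma map₂_eq_inl_inr {x : V₂} {b : {x : V₂ // x ≠ u₂ ∧ x ≠ v₂}} :
    map₂ u₁ v₁ u₂ v₂ x = .inl (.inr b) ↔ x = b.1 := by
  constructor
  · intro h
    unfold map₂ at h
    split_ifs at h with h1 h2 <;> simp_all [Subtype.ext_iff]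
  · intro h
    subst h
    unfold map₂
    rw [dif_neg b.2.1, dif_neg b.2.2]

lemma map₁_eq_inr_false {x : V₁} :
    map₁ u₁ v₁ u₂ v₂ x = .inr false ↔ x = u₁ := by
  constructor
  · intro h
    unfold map₁ at h
    split_ifs at h with h1 h2 <;> simp_all [Subtype.ext_iff]
  · intro h
    subst h
    unfold map₁
    rw [dif_pos rfl]

lemma map₁_eq_inr_true {x : V₁} (huv : u₁ ≠ v₁) :
    map₁ u₁ v₁ u₂ v₂ x = .inr true ↔ x = v₁ := by
  constructor
  · intro h
    unfold map₁ at h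
    split_ifs at h with h1 h2 <;> simp_all [Subtype.ext_iff]
  · intro h
    subst h
    unfold map₁
    rw [dif_neg (Ne.symm huv), dif_pos rfl]

lemma map₂_eq_inr_false {x : V₂} :
    map₂ u₁ v₁ u₂ v₂ x = .inr false ↔ x = u₂ := by
  constructor
  · intro h
    unfold map₂ at h
    split_ifs at h with h1 h2 <;> simp_all [Subtype.ext_iff]
  · intro h
    subst h
    unfold map₂
    rw [dif_pos rfl]

lemma map₂_eq_inr_true {x : V₂} (huv : u₂ ≠ v₂) :
    map₂ u₁ v₁ u₂ v₂ x = .inr true ↔ x = v₂ := by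
  constructor
  · intro h
    unfold map₂ at h
    split_ifs at h with h1 h2 <;> simp_all [Subtype.ext_iff]
  · intro h
    subst h
    unfold map₂
    rw [dif_neg (Ne.symm huv), dif_pos rfl]

lemma map₁_inj (huv : u₁ ≠ v₁) : Function.Injective (map₁ u₁ v₁ u₂ v₂) := by
  intro x y h
  unfold map₁ at h
  split_ifs at h <;> simp_all [Subtype.ext_iff]

lemma map₂_inj (huv : u₂ ≠ v₂) : Function.Injective (map₂ u₁ v₁ u₂ v₂) := by
  intro x y h
  unfold map₂ at h
  split_ifs at h <;> simp_all [Subtype.ext_iff]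

variable (G₁ : SimpleGraph V₁) (G₂ : SimpleGraph V₂)

/-- Neighbor set of an interior vertex of the first part. -/
lemma nbhd_int₁ (huv : u₁ ≠ v₁) (a : {x : V₁ // x ≠ u₁ ∧ x ≠ v₁}) :
    (glueE G₁ G₂ u₁ v₁ u₂ v₂).neighborSet (.inl (.inl a)) =
      map₁ u₁ v₁ u₂ v₂ '' G₁.neighborSet a.1 := by
  ext z
  simp only [mem_neighborSet, glueE, fromRel_adj, Set.mem_image, mem_neighborSet]
  rcases z with ((b | b) | (_ | _))
  · constructor
    · rintro ⟨hne, h | h⟩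
      · exact ⟨b.1, h, map₁_eq_inl_inl.mpr rfl⟩
      · exact ⟨b.1, h.symm, map₁_eq_inl_inl.mpr rfl⟩
    · rintro ⟨x, hx, hmap⟩
      rw [map₁_eq_inl_inl] at hmap
      subst hmap
      refine ⟨?_, Or.inl hx⟩
      simp only [ne_eq, Sum.inl.injEq, Subtype.ext_iff]
      exact hx.ne
  · constructor
    · rintro ⟨hne, h | h⟩ <;> exact h.elim
    · rintro ⟨x, hx, hmap⟩
      unfold map₁ at hmap
      split_ifs at hmap <;> simp_all
  · -- z = .inr false
    constructor
    · rintro ⟨hne, h | h⟩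
      · exact h.elim
      · exact ⟨u₁, h.symm, map₁_eq_inr_false.mpr rfl⟩
    · rintro ⟨x, hx, hmap⟩
      rw [map₁_eq_inr_false] at hmap
      subst hmap
      exact ⟨by simp, Or.inr hx.symm⟩
  · -- z = .inr true
    constructor
    · rintro ⟨hne, h | h⟩
      · exact h.elim
      · exact ⟨v₁, h.symm, (map₁_eq_inr_true huv).mpr rfl⟩
    · rintro ⟨x, hx, hmap⟩
      rw [map₁_eq_inr_true huv] at hmap
      subst hmap
      exact ⟨by simp, Or.inr hx.symm⟩

/-- Neighbor set of an interior vertex of the second part. -/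
lemma nbhd_int₂ (huv : u₂ ≠ v₂) (a : {x : V₂ // x ≠ u₂ ∧ x ≠ v₂}) :
    (glueE G₁ G₂ u₁ v₁ u₂ v₂).neighborSet (.inl (.inr a)) =
      map₂ u₁ v₁ u₂ v₂ '' G₂.neighborSet a.1 := by
  ext z
  simp only [mem_neighborSet, glueE, fromRel_adj, Set.mem_image, mem_neighborSet]
  rcases z with ((b | b) | (_ | _))
  · constructor
    · rintro ⟨hne, h | h⟩ <;> exact h.elim
    · rintro ⟨x, hx, hmap⟩
      unfold map₂ at hmap
      split_ifs at hmap <;> simp_all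
  · constructor
    · rintro ⟨hne, h | h⟩
      · exact ⟨b.1, h, map₂_eq_inl_inr.mpr rfl⟩
      · exact ⟨b.1, h.symm, map₂_eq_inl_inr.mpr rfl⟩
    · rintro ⟨x, hx, hmap⟩
      rw [map₂_eq_inl_inr] at hmap
      subst hmap
      refine ⟨?_, Or.inl hx⟩
      simp only [ne_eq, Sum.inl.injEq, Sum.inr.injEq, Subtype.ext_iff]
      exact hx.ne
  · constructor
    · rintro ⟨hne, h | h⟩
      · exact h.elim
      · exact ⟨u₂, h.symm, map₂_eq_inr_false.mpr rfl⟩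
    · rintro ⟨x, hx, hmap⟩
      rw [map₂_eq_inr_false] at hmap
      subst hmap
      exact ⟨by simp, Or.inr hx.symm⟩
  · constructor
    · rintro ⟨hne, h | h⟩
      · exact h.elim
      · exact ⟨v₂, h.symm, (map₂_eq_inr_true huv).mpr rfl⟩
    · rintro ⟨x, hx, hmap⟩
      rw [map₂_eq_inr_true huv] at hmap
      subst hmap
      exact ⟨by simp, Or.inr hx.symm⟩

variable [Finite V₁] [Finite V₂]

lemma deg_int₁ (huv : u₁ ≠ v₁) (a : {x : V₁ // x ≠ u₁ ∧ x ≠ v₁}) :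
    deg (glueE G₁ G₂ u₁ v₁ u₂ v₂) (.inl (.inl a)) = deg G₁ a.1 := by
  rw [deg, nbhd_int₁ G₁ G₂ huv, Set.ncard_image_of_injective _ (map₁_inj huv), deg]

lemma deg_int₂ (huv : u₂ ≠ v₂) (a : {x : V₂ // x ≠ u₂ ∧ x ≠ v₂}) :
    deg (glueE G₁ G₂ u₁ v₁ u₂ v₂) (.inl (.inr a)) = deg G₂ a.1 := by
  rw [deg, nbhd_int₂ G₁ G₂ huv, Set.ncard_image_of_injective _ (map₂_inj huv), deg]

/-- The image of the neighbor set of `u₁` is contained in the neighbors of the glued `u`. -/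
lemma nbhd_u₁_sub :
    map₁ u₁ v₁ u₂ v₂ '' G₁.neighborSet u₁ ⊆
      (glueE G₁ G₂ u₁ v₁ u₂ v₂).neighborSet (.inr false) := by
  rintro z ⟨x, hx, rfl⟩
  simp only [mem_neighborSet] at hx ⊢
  unfold map₁
  split_ifs with h1 h2
  · exact absurd (h1 ▸ hx) (G₁.irrefl)
  · simp [glueE, fromRel_adj]
  · simp only [glueE, fromRel_adj]
    exact ⟨by simp, Or.inl hx⟩

lemma nbhd_v₁_sub :
    map₁ u₁ v₁ u₂ v₂ '' G₁.neighborSet v₁ ⊆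
      (glueE G₁ G₂ u₁ v₁ u₂ v₂).neighborSet (.inr true) := by
  rintro z ⟨x, hx, rfl⟩
  simp only [mem_neighborSet] at hx ⊢
  unfold map₁
  split_ifs with h1 h2
  · simp [glueE, fromRel_adj]
  · exact absurd (h2 ▸ hx) (G₁.irrefl)
  · simp only [glueE, fromRel_adj]
    exact ⟨by simp, Or.inl hx⟩

lemma nbhd_u₂_sub :
    map₂ u₁ v₁ u₂ v₂ '' G₂.neighborSet u₂ ⊆
      (glueE G₁ G₂ u₁ v₁ u₂ v₂).neighborSet (.inr false) := by
  rintro z ⟨x, hx, rfl⟩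
  simp only [mem_neighborSet] at hx ⊢
  unfold map₂
  split_ifs with h1 h2
  · exact absurd (h1 ▸ hx) (G₂.irrefl)
  · simp [glueE, fromRel_adj]
  · simp only [glueE, fromRel_adj]
    exact ⟨by simp, Or.inl hx⟩

lemma nbhd_v₂_sub :
    map₂ u₁ v₁ u₂ v₂ '' G₂.neighborSet v₂ ⊆
      (glueE G₁ G₂ u₁ v₁ u₂ v₂).neighborSet (.inr true) := by
  rintro z ⟨x, hx, rfl⟩
  simp only [mem_neighborSet] at hx ⊢
  unfold map₂
  split_ifs with h1 h2
  · simp [glueE, fromRel_adj]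
  · exact absurd (h2 ▸ hx) (G₂.irrefl)
  · simp only [glueE, fromRel_adj]
    exact ⟨by simp, Or.inl hx⟩

lemma deg_map₁_le (huv : u₁ ≠ v₁) (y : V₁) :
    deg G₁ y ≤ deg (glueE G₁ G₂ u₁ v₁ u₂ v₂) (map₁ u₁ v₁ u₂ v₂ y) := by
  by_cases h1 : y = u₁
  · rw [h1, map₁_eq_inr_false.mpr rfl]
    calc deg G₁ u₁ = (map₁ u₁ v₁ u₂ v₂ '' G₁.neighborSet u₁).ncard := by
          rw [Set.ncard_image_of_injective _ (map₁_inj huv)]; rfl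
      _ ≤ _ := Set.ncard_le_ncard (nbhd_u₁_sub G₁ G₂) (Set.toFinite _)
  by_cases h2 : y = v₁
  · rw [h2, (map₁_eq_inr_true huv).mpr rfl]
    calc deg G₁ v₁ = (map₁ u₁ v₁ u₂ v₂ '' G₁.neighborSet v₁).ncard := by
          rw [Set.ncard_image_of_injective _ (map₁_inj huv)]; rfl
      _ ≤ _ := Set.ncard_le_ncard (nbhd_v₁_sub G₁ G₂) (Set.toFinite _)
  · rw [show map₁ u₁ v₁ u₂ v₂ y = .inl (.inl ⟨y, h1, h2⟩) from map₁_eq_inl_inl.mpr rfl,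
      deg_int₁ G₁ G₂ huv]

lemma deg_map₂_le (huv : u₂ ≠ v₂) (y : V₂) :
    deg G₂ y ≤ deg (glueE G₁ G₂ u₁ v₁ u₂ v₂) (map₂ u₁ v₁ u₂ v₂ y) := by
  by_cases h1 : y = u₂
  · rw [h1, map₂_eq_inr_false.mpr rfl]
    calc deg G₂ u₂ = (map₂ u₁ v₁ u₂ v₂ '' G₂.neighborSet u₂).ncard := by
          rw [Set.ncard_image_of_injective _ (map₂_inj huv)]; rfl
      _ ≤ _ := Set.ncard_le_ncard (nbhd_u₂_sub G₁ G₂) (Set.toFinite _)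
  by_cases h2 : y = v₂
  · rw [h2, (map₂_eq_inr_true huv).mpr rfl]
    calc deg G₂ v₂ = (map₂ u₁ v₁ u₂ v₂ '' G₂.neighborSet v₂).ncard := by
          rw [Set.ncard_image_of_injective _ (map₂_inj huv)]; rfl
      _ ≤ _ := Set.ncard_le_ncard (nbhd_v₂_sub G₁ G₂) (Set.toFinite _)
  · rw [show map₂ u₁ v₁ u₂ v₂ y = .inl (.inr ⟨y, h1, h2⟩) from map₂_eq_inl_inr.mpr rfl,
      deg_int₂ G₁ G₂ huv]

lemma adj_map₁ (a : {x : V₁ // x ≠ u₁ ∧ x ≠ v₁}) {y : V₁} (h : G₁.Adj a.1 y) :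
    (glueE G₁ G₂ u₁ v₁ u₂ v₂).Adj (.inl (.inl a)) (map₁ u₁ v₁ u₂ v₂ y) := by
  unfold map₁
  split_ifs with h1 h2
  · subst h1
    simp only [glueE, fromRel_adj]
    exact ⟨by simp, Or.inr h.symm⟩
  · subst h2
    simp only [glueE, fromRel_adj]
    exact ⟨by simp, Or.inr h.symm⟩
  · simp only [glueE, fromRel_adj]
    exact ⟨by simp [Subtype.ext_iff, h.ne], Or.inl h⟩

lemma adj_map₂ (a : {x : V₂ // x ≠ u₂ ∧ x ≠ v₂}) {y : V₂} (h : G₂.Adj a.1 y) :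
    (glueE G₁ G₂ u₁ v₁ u₂ v₂).Adj (.inl (.inr a)) (map₂ u₁ v₁ u₂ v₂ y) := by
  unfold map₂
  split_ifs with h1 h2
  · subst h1
    simp only [glueE, fromRel_adj]
    exact ⟨by simp, Or.inr h.symm⟩
  · subst h2
    simp only [glueE, fromRel_adj]
    exact ⟨by simp, Or.inr h.symm⟩
  · simp only [glueE, fromRel_adj]
    exact ⟨by simp [Subtype.ext_iff, h.ne], Or.inl h⟩

lemma adj_top (b : Bool) :
    (glueE G₁ G₂ u₁ v₁ u₂ v₂).Adj (.inr (!b)) (.inr b) := by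
  cases b <;> simp [glueE, fromRel_adj]

/-- The key construction: the mapped strong dominating sets together with the glued
endpoint of larger degree form a strong dominating set of the gluing. -/
lemma glue_sds {D₁ : Set V₁} {D₂ : Set V₂} (hD₁ : IsSDS G₁ D₁) (hD₂ : IsSDS G₂ D₂)
    (huv₁ : u₁ ≠ v₁) (huv₂ : u₂ ≠ v₂) (w : Bool)
    (hdeg : deg (glueE G₁ G₂ u₁ v₁ u₂ v₂) (.inr (!w)) ≤
      deg (glueE G₁ G₂ u₁ v₁ u₂ v₂) (.inr w)) :
    IsSDS (glueE G₁ G₂ u₁ v₁ u₂ v₂)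
      (map₁ u₁ v₁ u₂ v₂ '' D₁ ∪ map₂ u₁ v₁ u₂ v₂ '' D₂ ∪ {.inr w}) := by
  intro x hx
  rcases x with ((a | a) | b)
  · have ha : a.1 ∉ D₁ := fun h =>
      hx (Or.inl (Or.inl ⟨a.1, h, map₁_eq_inl_inl.mpr rfl⟩))
    obtain ⟨y, hyD, hyadj, hydeg⟩ := hD₁ a.1 ha
    refine ⟨map₁ u₁ v₁ u₂ v₂ y, Or.inl (Or.inl ⟨y, hyD, rfl⟩), adj_map₁ G₁ G₂ a hyadj, ?_⟩
    rw [deg_int₁ G₁ G₂ huv₁]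
    exact hydeg.trans (deg_map₁_le G₁ G₂ huv₁ y)
  · have ha : a.1 ∉ D₂ := fun h =>
      hx (Or.inl (Or.inr ⟨a.1, h, map₂_eq_inl_inr.mpr rfl⟩))
    obtain ⟨y, hyD, hyadj, hydeg⟩ := hD₂ a.1 ha
    refine ⟨map₂ u₁ v₁ u₂ v₂ y, Or.inl (Or.inr ⟨y, hyD, rfl⟩), adj_map₂ G₁ G₂ a hyadj, ?_⟩
    rw [deg_int₂ G₁ G₂ huv₂]
    exact hydeg.trans (deg_map₂_le G₁ G₂ huv₂ y)
  · by_cases hb : b = w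
    · exact absurd (Or.inr (by simp [hb])) hx
    · have hbw : b = !w := by cases b <;> cases w <;> simp_all
      subst hbw
      exact ⟨.inr w, Or.inr rfl, adj_top G₁ G₂ w, hdeg⟩

/-- There is a minimum strong dominating set. -/
lemma exists_min_sds {V : Type*} (G : SimpleGraph V) :
    ∃ D : Set V, IsSDS G D ∧ D.ncard = gammaSt G := by
  have huniv : IsSDS G Set.univ := fun x hx => absurd (Set.mem_univ x) hx
  have hne : {n | ∃ D : Set V, IsSDS G D ∧ D.ncard = n}.Nonempty :=
    ⟨_, Set.univ, huniv, rfl⟩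
  obtain ⟨D, h1, h2⟩ := Nat.sInf_mem hne
  exact ⟨D, h1, h2⟩

end Aux

/-- Upper bound for the strong domination number of the edge gluing of two connected graphs
of order at least 3. -/
theorem stmt_3 {V₁ V₂ : Type*} [Fintype V₁] [Fintype V₂]
    (G₁ : SimpleGraph V₁) (G₂ : SimpleGraph V₂)
    (hc₁ : G₁.Connected) (hc₂ : G₂.Connected)
    (hn₁ : 3 ≤ Fintype.card V₁) (hn₂ : 3 ≤ Fintype.card V₂)
    (u₁ v₁ : V₁) (u₂ v₂ : V₂) (he₁ : G₁.Adj u₁ v₁) (he₂ : G₂.Adj u₂ v₂) :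
    gammaSt (glueE G₁ G₂ u₁ v₁ u₂ v₂) ≤ gammaSt G₁ + gammaSt G₂ + 1 := by
  obtain ⟨D₁, hD₁, hcard₁⟩ := exists_min_sds G₁
  obtain ⟨D₂, hD₂, hcard₂⟩ := exists_min_sds G₂
  have huv₁ : u₁ ≠ v₁ := he₁.ne
  have huv₂ : u₂ ≠ v₂ := he₂.ne
  have key : ∀ w : Bool,
      deg (glueE G₁ G₂ u₁ v₁ u₂ v₂) (.inr (!w)) ≤
        deg (glueE G₁ G₂ u₁ v₁ u₂ v₂) (.inr w) →
      gammaSt (glueE G₁ G₂ u₁ v₁ u₂ v₂) ≤ gammaSt G₁ + gammaSt G₂ + 1 := by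
    intro w hdeg
    have hsds := glue_sds G₁ G₂ hD₁ hD₂ huv₁ huv₂ w hdeg
    have hmem : (map₁ u₁ v₁ u₂ v₂ '' D₁ ∪ map₂ u₁ v₁ u₂ v₂ '' D₂ ∪
        {Sum.inr w}).ncard ∈
        {n | ∃ D, IsSDS (glueE G₁ G₂ u₁ v₁ u₂ v₂) D ∧ D.ncard = n} :=
      ⟨_, hsds, rfl⟩
    calc gammaSt (glueE G₁ G₂ u₁ v₁ u₂ v₂) ≤ _ := Nat.sInf_le hmem
      _ ≤ (map₁ u₁ v₁ u₂ v₂ '' D₁ ∪ map₂ u₁ v₁ u₂ v₂ '' D₂).ncard +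
          ({Sum.inr w} : Set _).ncard := Set.ncard_union_le _ _
      _ ≤ (map₁ u₁ v₁ u₂ v₂ '' D₁).ncard + (map₂ u₁ v₁ u₂ v₂ '' D₂).ncard + 1 := by
          have := Set.ncard_union_le (map₁ u₁ v₁ u₂ v₂ '' D₁) (map₂ u₁ v₁ u₂ v₂ '' D₂)
          simp only [Set.ncard_singleton]
          omega
      _ = gammaSt G₁ + gammaSt G₂ + 1 := by
          rw [Set.ncard_image_of_injective _ (map₁_inj huv₁),
            Set.ncard_image_of_injective _ (map₂_inj huv₂), hcard₁, hcard₂]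
  rcases le_total (deg (glueE G₁ G₂ u₁ v₁ u₂ v₂) (.inr true))
      (deg (glueE G₁ G₂ u₁ v₁ u₂ v₂) (.inr false)) with h | h
  · exact key false h
  · exact key true h
end

section
/- Let C = C(G₁, …, G_n) be the chain of pairwise disjoint connected graphs G₁, …, G_n with respect to vertices {x_i, y_i}, obtained by identifying y_i with x_{i+1} for i = 1, …, n−1. Then γ_st(C) ≤ (Σ_{i=1}^{n} γ_st(G_i)) + n − 1. -/
open SimpleGraph

/-- The setoid on the disjoint union `Σ i, V i` generated by identifying the vertex `y i`
of `G i` with the vertex `x (i+1)` of `G (i+1)`. -/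
def chainSetoid {n : ℕ} {V : Fin n → Type*} (x y : ∀ i, V i) : Setoid (Σ i, V i) :=
  Relation.EqvGen.setoid (fun a b => ∃ (i j : Fin n), (j : ℕ) = (i : ℕ) + 1 ∧
    a = ⟨i, y i⟩ ∧ b = ⟨j, x j⟩)

/-- The chain `C(G₁, …, Gₙ)` of the graphs `G i` with respect to the vertices `x i, y i`:
the quotient of the disjoint union identifying `y i` with `x (i+1)`, two classes being
adjacent when they have representatives adjacent in some `G i`. -/
def chainGraph {n : ℕ} {V : Fin n → Type*} (G : ∀ i, SimpleGraph (V i)) (x y : ∀ i, V i) :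
    SimpleGraph (Quotient (chainSetoid x y)) :=
  SimpleGraph.fromRel (fun a b => ∃ (i : Fin n) (p q : V i),
    a = Quotient.mk (chainSetoid x y) ⟨i, p⟩ ∧
    b = Quotient.mk (chainSetoid x y) ⟨i, q⟩ ∧ (G i).Adj p q)

/-!
Take a minimum strong dominating set `Dᵢ` of every `Gᵢ` and add the `n - 1` junction vertices
`yᵢ = xᵢ₊₁`. A vertex of the chain outside this set is not a junction, so its class is a
singleton and its neighbourhood in the chain is its neighbourhood in its own `Gᵢ`; it is
therefore dominated by its dominator in `Dᵢ`, whose degree can only grow in the chain.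
-/

section Chain

variable {n : ℕ} {V : Fin n → Type*} (x y : ∀ i, V i)

def ChainRel (a b : Σ i, V i) : Prop :=
  ∃ (i j : Fin n), (j : ℕ) = (i : ℕ) + 1 ∧ a = ⟨i, y i⟩ ∧ b = ⟨j, x j⟩

def IsJunction (a : Σ i, V i) : Prop :=
  (∃ i : Fin n, (i : ℕ) + 1 < n ∧ a = ⟨i, y i⟩) ∨ (∃ j : Fin n, 0 < (j : ℕ) ∧ a = ⟨j, x j⟩)

def toChain (i : Fin n) (v : V i) : Quotient (chainSetoid x y) :=
  Quotient.mk (chainSetoid x y) ⟨i, v⟩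

/-- The `k`-th junction vertex `y k = x (k + 1)` of the chain. -/
def junction (k : Fin (n - 1)) : Quotient (chainSetoid x y) :=
  toChain x y (Fin.castLE (Nat.sub_le n 1) k) (y _)

open Classical in
/-- The representative of lowest index of a class: `x i` is repeatedly replaced by `y (i - 1)`. -/
noncomputable def chainRep : (Σ i, V i) → Σ i, V i
  | ⟨i, v⟩ =>
    if 0 < (i : ℕ) ∧ v = x i then chainRep ⟨⟨i - 1, by omega⟩, y ⟨i - 1, by omega⟩⟩
    else ⟨i, v⟩
  termination_by a => (a.1 : ℕ)
  decreasing_by simp; omega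

lemma chainRep_fst_le (a : Σ i, V i) : ((chainRep x y a).1 : ℕ) ≤ a.1 := by
  obtain ⟨i, v⟩ := a
  rw [chainRep.eq_1]
  split
  · exact (chainRep_fst_le _).trans (by simp)
  · exact le_rfl
  termination_by (a.1 : ℕ)
  decreasing_by simp; omega

lemma chainRep_mk_eq_self_or_fst_lt (i : Fin n) (v : V i) :
    chainRep x y ⟨i, v⟩ = ⟨i, v⟩ ∨ (v = x i ∧ ((chainRep x y ⟨i, v⟩).1 : ℕ) < i) := by
  rw [chainRep.eq_1]
  split
  · next h => exact Or.inr ⟨h.2, (chainRep_fst_le x y _).trans_lt (by simp only; omega)⟩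
  · exact Or.inl rfl

lemma chainRep_eq_of_chainRel {a b : Σ i, V i} (h : ChainRel x y a b) :
    chainRep x y a = chainRep x y b := by
  obtain ⟨⟨i, hi⟩, ⟨j, hj⟩, hij, rfl, rfl⟩ := h
  simp only at hij
  subst hij
  rw [chainRep.eq_1 x y ⟨i + 1, hj⟩, if_pos ⟨by simp, rfl⟩]
  simp

lemma chainRep_eq_of_chainSetoid {a b : Σ i, V i} (h : chainSetoid x y a b) :
    chainRep x y a = chainRep x y b :=
  Setoid.eqvGen_le (s := Setoid.ker (chainRep x y))
    (fun _ _ hab => chainRep_eq_of_chainRel x y hab) h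

lemma toChain_injective (i : Fin n) : Function.Injective (toChain x y i) := by
  intro p q h
  have hrep := chainRep_eq_of_chainSetoid x y (Quotient.exact h)
  rcases chainRep_mk_eq_self_or_fst_lt x y i p with hp | hp <;>
    rcases chainRep_mk_eq_self_or_fst_lt x y i q with hq | hq
  · rw [hp, hq] at hrep
    exact eq_of_heq (Sigma.mk.inj_iff.mp hrep).2
  · rw [← hrep, hp] at hq
    exact absurd hq.2 (lt_irrefl _)
  · rw [hrep, hq] at hp
    exact absurd hp.2 (lt_irrefl _)
  · exact hp.1.trans hq.1.symm

lemma eq_of_chainSetoid_of_not_isJunction {a b : Σ i, V i} (ha : ¬ IsJunction x y a)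
    (h : chainSetoid x y a b) : b = a := by
  classical
  have hker := Setoid.eqvGen_le
    (s := Setoid.ker fun c => if IsJunction x y c then none else some c)
    (fun c d ⟨i, j, hij, hc, hd⟩ => by
      have hcJ : IsJunction x y c := Or.inl ⟨i, by omega, hc⟩
      have hdJ : IsJunction x y d := Or.inr ⟨j, by omega, hd⟩
      simp only [Setoid.ker_def, if_pos hcJ, if_pos hdJ]) h
  simp only [Setoid.ker_def, if_neg ha] at hker
  split_ifs at hker with hb
  exact (Option.some_injective _ hker).symm

lemma mk_mem_range_junction {a : Σ i, V i} (ha : IsJunction x y a) :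
    Quotient.mk (chainSetoid x y) a ∈ Set.range (junction x y) := by
  rcases ha with ⟨i, hi, rfl⟩ | ⟨j, hj, rfl⟩
  · exact ⟨⟨i, by omega⟩, rfl⟩
  · exact ⟨⟨j - 1, by omega⟩, Quotient.sound (.rel _ _ ⟨_, j, by simp; omega, rfl, rfl⟩)⟩

lemma ncard_range_junction_le : (Set.range (junction x y)).ncard ≤ n - 1 := by
  simpa using Finite.card_range_le (junction x y)

variable (G : ∀ i, SimpleGraph (V i))

lemma chainGraph_adj_toChain {i : Fin n} {p q : V i} (h : (G i).Adj p q) :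
    (chainGraph G x y).Adj (toChain x y i p) (toChain x y i q) :=
  ⟨fun he => h.ne (toChain_injective x y i he), Or.inl ⟨i, p, q, rfl, rfl, h⟩⟩

variable [∀ i, Finite (V i)]

lemma deg_le_deg_chainGraph_toChain (i : Fin n) (v : V i) :
    deg (G i) v ≤ deg (chainGraph G x y) (toChain x y i v) := by
  have hsub : toChain x y i '' (G i).neighborSet v ⊆
      (chainGraph G x y).neighborSet (toChain x y i v) := by
    rintro _ ⟨q, hq, rfl⟩
    exact chainGraph_adj_toChain x y G hq
  calc deg (G i) v = (toChain x y i '' (G i).neighborSet v).ncard :=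
        (Set.ncard_image_of_injective _ (toChain_injective x y i)).symm
    _ ≤ _ := Set.ncard_le_ncard hsub

lemma deg_chainGraph_toChain_le {i : Fin n} {p : V i} (hp : ¬ IsJunction x y ⟨i, p⟩) :
    deg (chainGraph G x y) (toChain x y i p) ≤ deg (G i) p := by
  have hsub : (chainGraph G x y).neighborSet (toChain x y i p) ⊆
      toChain x y i '' (G i).neighborSet p := by
    have key : ∀ (j : Fin n) (u w : V j), toChain x y i p = toChain x y j u →
        (G j).Adj u w → toChain x y j w ∈ toChain x y i '' (G i).neighborSet p := by
      intro j u w hpu huw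
      obtain ⟨rfl, hu⟩ := Sigma.mk.inj_iff.mp
        (eq_of_chainSetoid_of_not_isJunction x y hp (Quotient.exact hpu))
      obtain rfl := eq_of_heq hu
      exact ⟨w, huw, rfl⟩
    rintro c ⟨-, ⟨j, u, w, hpu, rfl, huw⟩ | ⟨j, w, u, rfl, hpu, huw⟩⟩
    · exact key j u w hpu huw
    · exact key j u w hpu huw.symm
  calc deg (chainGraph G x y) (toChain x y i p)
      ≤ (toChain x y i '' (G i).neighborSet p).ncard := Set.ncard_le_ncard hsub
    _ ≤ deg (G i) p := Set.ncard_image_le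

theorem isSDS_chainGraph {D : ∀ i, Set (V i)} (hD : ∀ i, IsSDS (G i) (D i)) :
    IsSDS (chainGraph G x y) ((⋃ i, toChain x y i '' D i) ∪ Set.range (junction x y)) := by
  intro c hc
  obtain ⟨⟨i, p⟩, rfl⟩ := Quotient.exists_rep c
  have hpJ : ¬ IsJunction x y ⟨i, p⟩ := fun hJ => hc (Or.inr (mk_mem_range_junction x y hJ))
  have hpD : p ∉ D i := fun hp => hc (Or.inl (Set.mem_iUnion.2 ⟨i, p, hp, rfl⟩))
  obtain ⟨d, hdD, hpd, hdeg⟩ := hD i p hpD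
  refine ⟨toChain x y i d, Or.inl (Set.mem_iUnion.2 ⟨i, d, hdD, rfl⟩),
    chainGraph_adj_toChain x y G hpd, ?_⟩
  calc deg (chainGraph G x y) (toChain x y i p) ≤ deg (G i) p :=
        deg_chainGraph_toChain_le x y G hpJ
    _ ≤ deg (G i) d := hdeg
    _ ≤ deg (chainGraph G x y) (toChain x y i d) := deg_le_deg_chainGraph_toChain x y G i d

end Chain

lemma gammaSt_le_ncard {W : Type*} {G : SimpleGraph W} {D : Set W} (hD : IsSDS G D) :
    gammaSt G ≤ D.ncard :=
  Nat.sInf_le ⟨D, hD, rfl⟩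

lemma exists_isSDS_ncard_eq_gammaSt {W : Type*} (G : SimpleGraph W) :
    ∃ D : Set W, IsSDS G D ∧ D.ncard = gammaSt G :=
  Nat.sInf_mem (s := {m | ∃ D : Set W, IsSDS G D ∧ D.ncard = m})
    ⟨_, Set.univ, fun v hv => absurd (Set.mem_univ v) hv, rfl⟩

theorem stmt_8_general {n : ℕ} {V : Fin n → Type*} [∀ i, Fintype (V i)]
    (G : ∀ i, SimpleGraph (V i)) (x y : ∀ i, V i) :
    gammaSt (chainGraph G x y) ≤ (∑ i, gammaSt (G i)) + (n - 1) := by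
  choose D hD hcard using fun i => exists_isSDS_ncard_eq_gammaSt (G i)
  calc gammaSt (chainGraph G x y)
      ≤ ((⋃ i, toChain x y i '' D i) ∪ Set.range (junction x y)).ncard :=
        gammaSt_le_ncard (isSDS_chainGraph x y G hD)
    _ ≤ (⋃ i, toChain x y i '' D i).ncard + (Set.range (junction x y)).ncard :=
        Set.ncard_union_le _ _
    _ ≤ (∑ i, (D i).ncard) + (n - 1) := by
        gcongr
        · exact (Set.ncard_iUnion_le_of_fintype _).trans
            (Finset.sum_le_sum fun i _ => Set.ncard_image_le)
        · exact ncard_range_junction_le x y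
    _ = (∑ i, gammaSt (G i)) + (n - 1) := by simp only [hcard]

/-- Upper bound on the strong domination number of the chain of `n` pairwise disjoint
connected graphs. -/
theorem stmt_8 {n : ℕ} (hn : 1 ≤ n) {V : Fin n → Type*} [∀ i, Fintype (V i)]
    (G : ∀ i, SimpleGraph (V i)) (hconn : ∀ i, (G i).Connected) (x y : ∀ i, V i) :
    gammaSt (chainGraph G x y) ≤ (∑ i, gammaSt (G i)) + (n - 1) :=
  stmt_8_general G x y
end

section
/- Let L = L(G₁, …, G_n) be the link of pairwise disjoint connected graphs G₁, …, G_n with respect to vertices {x_i, y_i}, obtained by adding the edges y_i x_{i+1} for i = 1, …, n−1. Then γ_st(L) ≤ (Σ_{i=1}^{n} γ_st(G_i)) + n − 1. -/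
open SimpleGraph

/-- The link `L(G₁, …, Gₙ)` of the graphs `G i` with respect to the vertices `x i, y i`:
the disjoint union of the `G i` together with the added edges `(y i)(x (i+1))`. -/
def linkGraph {n : ℕ} {V : Fin n → Type*} (G : ∀ i, SimpleGraph (V i)) (x y : ∀ i, V i) :
    SimpleGraph (Σ i, V i) :=
  SimpleGraph.fromRel (fun a b =>
    (∃ (i : Fin n) (p q : V i), a = ⟨i, p⟩ ∧ b = ⟨i, q⟩ ∧ (G i).Adj p q) ∨
    (∃ (i j : Fin n), (j : ℕ) = (i : ℕ) + 1 ∧ a = ⟨i, y i⟩ ∧ b = ⟨j, x j⟩))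

section Aux
variable {n : ℕ} {V : Fin n → Type*} (G : ∀ i, SimpleGraph (V i)) (x y : ∀ i, V i)

lemma link_adj_same (i : Fin n) (p q : V i) :
    (linkGraph G x y).Adj ⟨i, p⟩ ⟨i, q⟩ ↔ (G i).Adj p q := by
  constructor
  · rintro ⟨hne, h | h⟩ <;> rcases h with ⟨i', p', q', h1, h2, h3⟩ | ⟨i', j', hij, h1, h2⟩
    · cases h1; cases h2; exact h3
    · cases h1; cases h2; omega
    · cases h1; cases h2; exact h3.symm
    · cases h1; cases h2; omega
  · intro h
    exact ⟨by simp [Sigma.mk.inj_iff, h.ne], Or.inl (Or.inl ⟨i, p, q, rfl, rfl, h⟩)⟩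

lemma deg_link_ge (i : Fin n) (v : V i) [∀ i, Fintype (V i)] :
    deg (G i) v ≤ deg (linkGraph G x y) ⟨i, v⟩ := by
  have hsub : Sigma.mk i '' ((G i).neighborSet v) ⊆ (linkGraph G x y).neighborSet ⟨i, v⟩ := by
    rintro _ ⟨q, hq, rfl⟩
    exact (link_adj_same G x y i v q).2 hq
  have := Set.ncard_le_ncard hsub (Set.toFinite _)
  rwa [Set.ncard_image_of_injective _ sigma_mk_injective] at this

end Aux

example : True := trivial

section Aux2
variable {n : ℕ} {V : Fin n → Type*} (G : ∀ i, SimpleGraph (V i)) (x y : ∀ i, V i)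
  [∀ i, Fintype (V i)]

lemma link_extra (i : Fin n) (v : V i)
    (h : deg (G i) v < deg (linkGraph G x y) ⟨i, v⟩) :
    ∃ (i' j' : Fin n), (j' : ℕ) = (i' : ℕ) + 1 ∧
      ((⟨i, v⟩ : Σ k, V k) = ⟨i', y i'⟩ ∨ (⟨i, v⟩ : Σ k, V k) = ⟨j', x j'⟩) := by
  by_contra hc
  push_neg at hc
  have hsub : (linkGraph G x y).neighborSet ⟨i, v⟩ ⊆ Sigma.mk i '' ((G i).neighborSet v) := by
    rintro w hw
    obtain ⟨hne, hrel | hrel⟩ := hw <;>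
      rcases hrel with ⟨i', p', q', h1, h2, h3⟩ | ⟨i', j', hij, h1, h2⟩
    · cases h1; cases h2; exact ⟨_, h3, rfl⟩
    · exact absurd h1 (hc i' j' hij).1
    · cases h2; cases h1; exact ⟨_, h3.symm, rfl⟩
    · exact absurd h2 (hc i' j' hij).2
  have := Set.ncard_le_ncard hsub (Set.toFinite _)
  rw [Set.ncard_image_of_injective _ sigma_mk_injective] at this
  simp only [deg] at h
  omega

end Aux2


/-- Upper bound on the strong domination number of the link of `n` pairwise disjoint
connected graphs. -/
theorem stmt_12 {n : ℕ} (hn : 1 ≤ n) {V : Fin n → Type*} [∀ i, Fintype (V i)]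
    (G : ∀ i, SimpleGraph (V i)) (hconn : ∀ i, (G i).Connected) (x y : ∀ i, V i) :
    gammaSt (linkGraph G x y) ≤ (∑ i, gammaSt (G i)) + (n - 1) := by
  classical
  have hex : ∀ i, ∃ D : Set (V i), IsSDS (G i) D ∧ D.ncard = gammaSt (G i) := by
    intro i
    have hne : {m | ∃ D : Set (V i), IsSDS (G i) D ∧ D.ncard = m}.Nonempty :=
      ⟨_, Set.univ, fun v hv => absurd (Set.mem_univ v) hv, rfl⟩
    exact Nat.sInf_mem hne
  choose Dfam hSDS hcard using hex
  set L := linkGraph G x y with hL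
  let A : Fin (n-1) → Σ k, V k := fun k => ⟨⟨(k : ℕ), by have := k.isLt; omega⟩, y _⟩
  let B : Fin (n-1) → Σ k, V k := fun k => ⟨⟨(k : ℕ) + 1, by have := k.isLt; omega⟩, x _⟩
  let f : Fin (n-1) → Σ k, V k := fun k => if deg L (A k) < deg L (B k) then B k else A k
  let S : Set (Σ k, V k) := {a | a.2 ∈ Dfam a.1}
  let D : Set (Σ k, V k) := S ∪ Set.range f
  have hDS : IsSDS L D := by
    rintro ⟨i, v⟩ hv
    have hvS : v ∉ Dfam i := fun h => hv (Or.inl h)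
    have hvf : (⟨i, v⟩ : Σ k, V k) ∉ Set.range f := fun h => hv (Or.inr h)
    have h1 : deg (G i) v ≤ deg L ⟨i, v⟩ := deg_link_ge G x y i v
    rcases eq_or_lt_of_le h1 with heq | hlt
    · obtain ⟨u, hu, hadj, hdeg⟩ := hSDS i v hvS
      refine ⟨⟨i, u⟩, Or.inl hu, (link_adj_same G x y i v u).2 hadj, ?_⟩
      rw [← heq]
      exact hdeg.trans (deg_link_ge G x y i u)
    · obtain ⟨i', j', hij, hor⟩ := link_extra G x y i v hlt
      have hi'lt : (i' : ℕ) < n - 1 := by have := j'.isLt; omega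
      set k : Fin (n - 1) := ⟨(i' : ℕ), hi'lt⟩ with hk
      have hj' : (⟨(i' : ℕ) + 1, by have := j'.isLt; omega⟩ : Fin n) = j' := Fin.ext hij.symm
      have hAk : A k = ⟨i', y i'⟩ := rfl
      have hBk : B k = ⟨j', x j'⟩ := by rw [← hj']
      have hadjAB : L.Adj (A k) (B k) := by
        refine ⟨?_, Or.inl (Or.inr ⟨i', j', hij, hAk, hBk⟩)⟩
        intro hEq
        have h2 := congrArg Fin.val (congrArg Sigma.fst hEq)
        simp only [A, B] at h2
        omega
      rcases hor with hA | hB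
      · have hc : deg L (A k) < deg L (B k) := by
          by_contra hc
          exact hvf ⟨k, by simp only [f, if_neg hc, hAk]; exact hA.symm⟩
        refine ⟨B k, Or.inr ⟨k, by simp only [f, if_pos hc]⟩, ?_, ?_⟩
        · rw [hA, ← hAk]; exact hadjAB
        · rw [hA, ← hAk]; exact le_of_lt hc
      · have hc : ¬ deg L (A k) < deg L (B k) := by
          intro hc
          exact hvf ⟨k, by simp only [f, if_pos hc, hBk]; exact hB.symm⟩
        refine ⟨A k, Or.inr ⟨k, by simp only [f, if_neg hc]⟩, ?_, ?_⟩
        · rw [hB, ← hBk]; exact hadjAB.symm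
        · rw [hB, ← hBk]; omega
  have hle : gammaSt L ≤ D.ncard := Nat.sInf_le ⟨D, hDS, rfl⟩
  refine hle.trans ?_
  have hS : S.ncard = ∑ i, gammaSt (G i) := by
    have hSeq : S = ↑(Finset.univ.sigma fun i => (Dfam i).toFinset) := by
      ext ⟨i, v⟩; simp [S]
    rw [hSeq, Set.ncard_coe_finset, Finset.card_sigma]
    refine Finset.sum_congr rfl fun i _ => ?_
    rw [← hcard i, Set.ncard_eq_toFinset_card']
  have hf : (Set.range f).ncard ≤ n - 1 := by
    rw [← Set.image_univ]
    refine (Set.ncard_image_le (Set.toFinite _)).trans ?_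
    simp [Set.ncard_univ]
  calc D.ncard ≤ S.ncard + (Set.range f).ncard := Set.ncard_union_le _ _
    _ ≤ (∑ i, gammaSt (G i)) + (n - 1) := by rw [hS]; omega
end

section
/- Let G₁ and G₂ be connected graphs, each of order at least 3, with edges u₁v₁ ∈ E(G₁), u₂v₂ ∈ E(G₂), and let G be their edge gluing, identifying u₁ with u₂ into u and v₁ with v₂ into v. If D₁ and D₂ are minimum strong dominating sets of G₁, G₂ with u₁ ∈ D₁ and v₁ ∈ D₁, then γ_st(G) ≤ γ_st(G₁) + γ_st(G₂). -/
open SimpleGraph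

section Aux

set_option linter.unusedSectionVars false
set_option linter.unusedVariables false

variable {V₁ V₂ : Type*} [DecidableEq V₁] [DecidableEq V₂]

/-- Embedding of `V₁` into the glued vertex type. -/
def fL (u₁ v₁ : V₁) (u₂ v₂ : V₂) (a : V₁) :
    ({x : V₁ // x ≠ u₁ ∧ x ≠ v₁} ⊕ {x : V₂ // x ≠ u₂ ∧ x ≠ v₂}) ⊕ Bool :=
  if h : a = u₁ then .inr false else if h' : a = v₁ then .inr true
  else .inl (.inl ⟨a, h, h'⟩)

/-- Embedding of `V₂` into the glued vertex type. -/
def fR (u₁ v₁ : V₁) (u₂ v₂ : V₂) (b : V₂) :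
    ({x : V₁ // x ≠ u₁ ∧ x ≠ v₁} ⊕ {x : V₂ // x ≠ u₂ ∧ x ≠ v₂}) ⊕ Bool :=
  if h : b = u₂ then .inr false else if h' : b = v₂ then .inr true
  else .inl (.inr ⟨b, h, h'⟩)

variable {u₁ v₁ : V₁} {u₂ v₂ : V₂}

lemma fL_of_ne {a : V₁} (ha : a ≠ u₁ ∧ a ≠ v₁) :
    fL u₁ v₁ u₂ v₂ a = .inl (.inl ⟨a, ha⟩) := by
  unfold fL; rw [dif_neg ha.1, dif_neg ha.2]

lemma fR_of_ne {b : V₂} (hb : b ≠ u₂ ∧ b ≠ v₂) :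
    fR u₁ v₁ u₂ v₂ b = .inl (.inr ⟨b, hb⟩) := by
  unfold fR; rw [dif_neg hb.1, dif_neg hb.2]

lemma fL_u : fL u₁ v₁ u₂ v₂ u₁ = .inr false := by unfold fL; rw [dif_pos rfl]

lemma fL_v (hne : u₁ ≠ v₁) : fL u₁ v₁ u₂ v₂ v₁ = .inr true := by
  unfold fL; rw [dif_neg hne.symm, dif_pos rfl]

lemma fR_u : fR u₁ v₁ u₂ v₂ u₂ = .inr false := by unfold fR; rw [dif_pos rfl]

lemma fR_v (hne : u₂ ≠ v₂) : fR u₁ v₁ u₂ v₂ v₂ = .inr true := by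
  unfold fR; rw [dif_neg hne.symm, dif_pos rfl]

lemma fL_inj (hne : u₁ ≠ v₁) : Function.Injective (fL u₁ v₁ u₂ v₂) := by
  intro a b hab
  unfold fL at hab
  split_ifs at hab <;> simp_all

lemma fR_inj (hne : u₂ ≠ v₂) : Function.Injective (fR u₁ v₁ u₂ v₂ : V₂ → _) := by
  intro a b hab
  unfold fR at hab
  split_ifs at hab <;> simp_all

variable {G₁ : SimpleGraph V₁} {G₂ : SimpleGraph V₂}

lemma fL_adj {a b : V₁} (hab : G₁.Adj a b) :
    (glueE G₁ G₂ u₁ v₁ u₂ v₂).Adj (fL u₁ v₁ u₂ v₂ a) (fL u₁ v₁ u₂ v₂ b) := by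
  have hne : a ≠ b := hab.ne
  unfold fL
  rw [glueE, fromRel_adj]
  split_ifs with h1 h2 h3 h4 h5 h6 h7 h8 <;> subst_vars <;>
    simp_all [SimpleGraph.adj_comm]

lemma fR_adj {a b : V₂} (hab : G₂.Adj a b) :
    (glueE G₁ G₂ u₁ v₁ u₂ v₂).Adj (fR u₁ v₁ u₂ v₂ a) (fR u₁ v₁ u₂ v₂ b) := by
  have hne : a ≠ b := hab.ne
  unfold fR
  rw [glueE, fromRel_adj]
  split_ifs with h1 h2 h3 h4 h5 h6 h7 h8 <;> subst_vars <;>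
    simp_all [SimpleGraph.adj_comm]

lemma deg_le_L [Finite V₁] [Finite V₂] (hne : u₁ ≠ v₁) (a : V₁) :
    deg G₁ a ≤ deg (glueE G₁ G₂ u₁ v₁ u₂ v₂) (fL u₁ v₁ u₂ v₂ a) := by
  have hsub : fL u₁ v₁ u₂ v₂ '' G₁.neighborSet a ⊆
      (glueE G₁ G₂ u₁ v₁ u₂ v₂).neighborSet (fL u₁ v₁ u₂ v₂ a) := by
    rintro _ ⟨b, hb, rfl⟩
    exact fL_adj hb
  calc deg G₁ a = (fL u₁ v₁ u₂ v₂ '' G₁.neighborSet a).ncard :=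
        (Set.ncard_image_of_injective _ (fL_inj hne)).symm
    _ ≤ _ := Set.ncard_le_ncard hsub (Set.toFinite _)

lemma deg_le_R [Finite V₁] [Finite V₂] (hne : u₂ ≠ v₂) (b : V₂) :
    deg G₂ b ≤ deg (glueE G₁ G₂ u₁ v₁ u₂ v₂) (fR u₁ v₁ u₂ v₂ b) := by
  have hsub : fR u₁ v₁ u₂ v₂ '' G₂.neighborSet b ⊆
      (glueE G₁ G₂ u₁ v₁ u₂ v₂).neighborSet (fR u₁ v₁ u₂ v₂ b) := by
    rintro _ ⟨c, hc, rfl⟩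
    exact fR_adj hc
  calc deg G₂ b = (fR u₁ v₁ u₂ v₂ '' G₂.neighborSet b).ncard :=
        (Set.ncard_image_of_injective _ (fR_inj hne)).symm
    _ ≤ _ := Set.ncard_le_ncard hsub (Set.toFinite _)

lemma nbhd_eq_L (hne : u₁ ≠ v₁) {a : V₁} (ha : a ≠ u₁ ∧ a ≠ v₁) :
    (glueE G₁ G₂ u₁ v₁ u₂ v₂).neighborSet (.inl (.inl ⟨a, ha⟩)) =
      fL u₁ v₁ u₂ v₂ '' G₁.neighborSet a := by
  ext w
  constructor
  · intro hw
    rw [SimpleGraph.mem_neighborSet, glueE, fromRel_adj] at hw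
    rcases w with ((⟨b, hb⟩ | ⟨b, hb⟩) | (_ | _))
    · have hab : G₁.Adj a b := by
        rcases hw.2 with h | h
        · exact h
        · exact h.symm
      exact ⟨b, hab, fL_of_ne hb⟩
    · simp only at hw
      rcases hw.2 with h | h <;> exact absurd h not_false
    · have hau : G₁.Adj a u₁ := by
        rcases hw.2 with h | h
        · exact absurd h not_false
        · exact h.symm
      exact ⟨u₁, hau, fL_u⟩
    · have hav : G₁.Adj a v₁ := by
        rcases hw.2 with h | h
        · exact absurd h not_false
        · exact h.symm
      exact ⟨v₁, hav, fL_v hne⟩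
  · rintro ⟨b, hb, rfl⟩
    have := fL_adj (u₁ := u₁) (v₁ := v₁) (u₂ := u₂) (v₂ := v₂) (G₂ := G₂) hb
    rwa [fL_of_ne ha] at this

lemma nbhd_eq_R (hne : u₂ ≠ v₂) {b : V₂} (hb : b ≠ u₂ ∧ b ≠ v₂) :
    (glueE G₁ G₂ u₁ v₁ u₂ v₂).neighborSet (.inl (.inr ⟨b, hb⟩)) =
      fR u₁ v₁ u₂ v₂ '' G₂.neighborSet b := by
  ext w
  constructor
  · intro hw
    rw [SimpleGraph.mem_neighborSet, glueE, fromRel_adj] at hw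
    rcases w with ((⟨c, hc⟩ | ⟨c, hc⟩) | (_ | _))
    · simp only at hw
      rcases hw.2 with h | h <;> exact absurd h not_false
    · have hbc : G₂.Adj b c := by
        rcases hw.2 with h | h
        · exact h
        · exact h.symm
      exact ⟨c, hbc, fR_of_ne hc⟩
    · have hbu : G₂.Adj b u₂ := by
        rcases hw.2 with h | h
        · exact absurd h not_false
        · exact h.symm
      exact ⟨u₂, hbu, fR_u⟩
    · have hbv : G₂.Adj b v₂ := by
        rcases hw.2 with h | h
        · exact absurd h not_false
        · exact h.symm
      exact ⟨v₂, hbv, fR_v hne⟩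
  · rintro ⟨c, hc, rfl⟩
    have := fR_adj (u₁ := u₁) (v₁ := v₁) (u₂ := u₂) (v₂ := v₂) (G₁ := G₁) hc
    rwa [fR_of_ne hb] at this

lemma deg_eq_L [Finite V₁] [Finite V₂] (hne : u₁ ≠ v₁) {a : V₁} (ha : a ≠ u₁ ∧ a ≠ v₁) :
    deg (glueE G₁ G₂ u₁ v₁ u₂ v₂) (.inl (.inl ⟨a, ha⟩)) = deg G₁ a := by
  unfold deg
  rw [nbhd_eq_L hne ha, Set.ncard_image_of_injective _ (fL_inj hne)]

lemma deg_eq_R [Finite V₁] [Finite V₂] (hne : u₂ ≠ v₂) {b : V₂} (hb : b ≠ u₂ ∧ b ≠ v₂) :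
    deg (glueE G₁ G₂ u₁ v₁ u₂ v₂) (.inl (.inr ⟨b, hb⟩)) = deg G₂ b := by
  unfold deg
  rw [nbhd_eq_R hne hb, Set.ncard_image_of_injective _ (fR_inj hne)]

end Aux

/-- If there are minimum strong dominating sets `D₁` of `G₁` and `D₂` of `G₂` with
`u₁ ∈ D₁` and `v₁ ∈ D₁`, then the edge gluing `G` satisfies
`γ_st(G) ≤ γ_st(G₁) + γ_st(G₂)`. -/
theorem stmt_17 {V₁ V₂ : Type*} [Fintype V₁] [Fintype V₂]
    (G₁ : SimpleGraph V₁) (G₂ : SimpleGraph V₂)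
    (hc₁ : G₁.Connected) (hc₂ : G₂.Connected)
    (hn₁ : 3 ≤ Fintype.card V₁) (hn₂ : 3 ≤ Fintype.card V₂)
    (u₁ v₁ : V₁) (u₂ v₂ : V₂) (he₁ : G₁.Adj u₁ v₁) (he₂ : G₂.Adj u₂ v₂)
    (D₁ : Set V₁) (D₂ : Set V₂)
    (hD₁ : IsSDS G₁ D₁) (hD₁min : D₁.ncard = gammaSt G₁)
    (hD₂ : IsSDS G₂ D₂) (hD₂min : D₂.ncard = gammaSt G₂)
    (hu : u₁ ∈ D₁) (hv : v₁ ∈ D₁) :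
    gammaSt (glueE G₁ G₂ u₁ v₁ u₂ v₂) ≤ gammaSt G₁ + gammaSt G₂ := by
  classical
  have hne₁ : u₁ ≠ v₁ := he₁.ne
  have hne₂ : u₂ ≠ v₂ := he₂.ne
  set G := glueE G₁ G₂ u₁ v₁ u₂ v₂ with hG
  set F : Set (({x : V₁ // x ≠ u₁ ∧ x ≠ v₁} ⊕ {x : V₂ // x ≠ u₂ ∧ x ≠ v₂}) ⊕ Bool) :=
    fL u₁ v₁ u₂ v₂ '' D₁ ∪ fR u₁ v₁ u₂ v₂ '' D₂ with hF
  have hSDS : IsSDS G F := by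
    rintro (((⟨a, ha⟩ | ⟨b, hb⟩) | (_ | _))) hx
    · -- a vertex from V₁ \ {u₁, v₁}
      have haD : a ∉ D₁ := by
        intro h
        exact hx (Or.inl ⟨a, h, fL_of_ne ha⟩)
      obtain ⟨y, hyD, hyadj, hydeg⟩ := hD₁ a haD
      refine ⟨fL u₁ v₁ u₂ v₂ y, Or.inl ⟨y, hyD, rfl⟩, ?_, ?_⟩
      · have h := fL_adj (u₁ := u₁) (v₁ := v₁) (u₂ := u₂) (v₂ := v₂) (G₂ := G₂) hyadj
        rwa [fL_of_ne ha] at h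
      · calc deg G (.inl (.inl ⟨a, ha⟩)) = deg G₁ a := deg_eq_L hne₁ ha
          _ ≤ deg G₁ y := hydeg
          _ ≤ deg G (fL u₁ v₁ u₂ v₂ y) := deg_le_L hne₁ y
    · -- a vertex from V₂ \ {u₂, v₂}
      have hbD : b ∉ D₂ := by
        intro h
        exact hx (Or.inr ⟨b, h, fR_of_ne hb⟩)
      obtain ⟨y, hyD, hyadj, hydeg⟩ := hD₂ b hbD
      refine ⟨fR u₁ v₁ u₂ v₂ y, Or.inr ⟨y, hyD, rfl⟩, ?_, ?_⟩
      · have h := fR_adj (u₁ := u₁) (v₁ := v₁) (u₂ := u₂) (v₂ := v₂) (G₁ := G₁) hyadj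
        rwa [fR_of_ne hb] at h
      · calc deg G (.inl (.inr ⟨b, hb⟩)) = deg G₂ b := deg_eq_R hne₂ hb
          _ ≤ deg G₂ y := hydeg
          _ ≤ deg G (fR u₁ v₁ u₂ v₂ y) := deg_le_R hne₂ y
    · exact absurd (Or.inl ⟨u₁, hu, fL_u⟩) hx
    · exact absurd (Or.inl ⟨v₁, hv, fL_v hne₁⟩) hx
  have hcard : F.ncard ≤ D₁.ncard + D₂.ncard := by
    refine (Set.ncard_union_le _ _).trans ?_
    rw [Set.ncard_image_of_injective _ (fL_inj hne₁),
      Set.ncard_image_of_injective _ (fR_inj hne₂)]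
  have hle : gammaSt G ≤ F.ncard := Nat.sInf_le ⟨F, hSDS, rfl⟩
  rw [← hD₁min, ← hD₂min]
  exact hle.trans hcard
end
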